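/- arXiv:2307.16754 — 3 statements merged into one kernel-verified Lean document; each statement's English description precedes it below -/
import Mathlib

section
/- Let X ⊆ ℝ^n be a convex set, let φ : ℝ^n → ℝ be differentiable, let M be a real m×n matrix, h ∈ ℝ^n, η ≥ 0, x₀ ∈ ℝ^n, and y ∈ ℝ^m. Suppose x⁺ ∈ X minimizes the function x ↦ η⟨x, h⟩ + D_φ(x, x₀) over X. Then for every u ∈ X: η⟨Mu, y⟩ ≥ η⟨x⁺, h⟩ + D_φ(x⁺, x₀) + η⟨u, Mᵀy − h⟩ + D_φ(u, x⁺) − D_φ(u, x₀). -/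
/-! Minimality of `x⁺` on the convex set `X` gives the first-order condition
`η⟨u - x⁺, h⟩ + ⟨∇φ(x⁺) - ∇φ(x₀), u - x⁺⟩ ≥ 0` for `u ∈ X`. By the three-point identity
`D_φ(u, x₀) = D_φ(u, x⁺) + D_φ(x⁺, x₀) + ⟨∇φ(x⁺) - ∇φ(x₀), u - x⁺⟩` and `⟨Mu, y⟩ = ⟨u, Mᵀy⟩`,
this is exactly the claimed inequality. -/

/-- The Bregman divergence `D_f(a, b) = f a - f b - ⟨∇f(b), a - b⟩`. -/
noncomputable def breg {d : ℕ} (f : (Fin d → ℝ) → ℝ) (a b : Fin d → ℝ) : ℝ :=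
  f a - f b - fderiv ℝ f b (a - b)

open Matrix

theorem breg_sub_breg_sub_breg {d : ℕ} (f : (Fin d → ℝ) → ℝ) (u a b : Fin d → ℝ) :
    breg f u b - breg f u a - breg f a b = (fderiv ℝ f a - fderiv ℝ f b) (u - a) := by
  have hsplit : fderiv ℝ f b (u - b) = fderiv ℝ f b (u - a) + fderiv ℝ f b (a - b) := by
    rw [← map_add, sub_add_sub_cancel]
  simp only [breg, _root_.sub_apply, hsplit]
  ring

theorem hasFDerivAt_breg_left {d : ℕ} {f : (Fin d → ℝ) → ℝ} {a : Fin d → ℝ}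
    (hf : DifferentiableAt ℝ f a) (b : Fin d → ℝ) :
    HasFDerivAt (fun x => breg f x b) (fderiv ℝ f a - fderiv ℝ f b) a := by
  have hlin : HasFDerivAt (fun x => fderiv ℝ f b (x - b)) (fderiv ℝ f b) a := by
    simpa only [map_sub] using (fderiv ℝ f b).hasFDerivAt.sub_const (fderiv ℝ f b b)
  exact (hf.hasFDerivAt.sub_const (f b)).sub hlin

theorem IsMinOn.hasFDerivWithinAt_nonneg_of_convex {E : Type*} [NormedAddCommGroup E]
    [NormedSpace ℝ E] {f : E → ℝ} {f' : E →L[ℝ] ℝ} {s : Set E} {a u : E}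
    (h : IsMinOn f s a) (hf : HasFDerivWithinAt f f' s a) (hs : Convex ℝ s) (ha : a ∈ s)
    (hu : u ∈ s) : 0 ≤ f' (u - a) :=
  h.localize.hasFDerivWithinAt_nonneg hf
    (sub_mem_posTangentConeAt_of_segment_subset (hs.segment_subset ha hu))

theorem breg_prox_optimality {n : ℕ} {X : Set (Fin n → ℝ)} (hX : Convex ℝ X)
    {φ : (Fin n → ℝ) → ℝ} {h x₀ xplus u : Fin n → ℝ} {η : ℝ}
    (hφ : DifferentiableAt ℝ φ xplus) (hxplus : xplus ∈ X)
    (hmin : IsMinOn (fun x => η * (x ⬝ᵥ h) + breg φ x x₀) X xplus) (hu : u ∈ X) :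
    0 ≤ η * ((u - xplus) ⬝ᵥ h) + (fderiv ℝ φ xplus - fderiv ℝ φ x₀) (u - xplus) := by
  let ℓ : (Fin n → ℝ) →L[ℝ] ℝ := ((dotProductBilin ℝ ℝ).flip h).toContinuousLinearMap
  have hderiv : HasFDerivAt (fun x => η * (x ⬝ᵥ h) + breg φ x x₀)
      (η • ℓ + (fderiv ℝ φ xplus - fderiv ℝ φ x₀)) xplus :=
    (ℓ.hasFDerivAt.const_mul η).add (hasFDerivAt_breg_left hφ x₀)
  simpa [ℓ] using
    hmin.hasFDerivWithinAt_nonneg_of_convex hderiv.hasFDerivWithinAt hX hxplus hu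

theorem stmt_4_general {m n : ℕ} (X : Set (Fin n → ℝ)) (hX : Convex ℝ X)
    (φ : (Fin n → ℝ) → ℝ) (hφ : Differentiable ℝ φ)
    (M : Matrix (Fin m) (Fin n) ℝ) (h : Fin n → ℝ) (η : ℝ)
    (x₀ : Fin n → ℝ) (y : Fin m → ℝ) (xplus : Fin n → ℝ) (hxplus : xplus ∈ X)
    (hmin : IsMinOn (fun x => η * (∑ j, x j * h j) + breg φ x x₀) X xplus) :
    ∀ u ∈ X,
      η * (∑ i, M.mulVec u i * y i) ≥
        η * (∑ j, xplus j * h j) + breg φ xplus x₀ +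
          η * (∑ j, u j * (M.transpose.mulVec y j - h j)) +
          breg φ u xplus - breg φ u x₀ := by
  intro u hu
  have hopt := breg_prox_optimality hX (hφ xplus) hxplus hmin hu
  have hthree := breg_sub_breg_sub_breg φ u xplus x₀
  change η * ((M *ᵥ u) ⬝ᵥ y) ≥ η * (xplus ⬝ᵥ h) + breg φ xplus x₀ +
    η * (u ⬝ᵥ (Mᵀ *ᵥ y - h)) + breg φ u xplus - breg φ u x₀
  rw [dotProduct_sub, dotProduct_transpose_mulVec, dotProduct_comm y]
  rw [sub_dotProduct] at hopt
  linarith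

/-- Primal-side prox inequality: if `x⁺ ∈ X` minimizes `x ↦ η⟨x, h⟩ + D_φ(x, x₀)` over the
convex set `X`, then for every `u ∈ X`,
`η⟨Mu, y⟩ ≥ η⟨x⁺, h⟩ + D_φ(x⁺, x₀) + η⟨u, Mᵀy - h⟩ + D_φ(u, x⁺) - D_φ(u, x₀)`. -/
theorem stmt_4 {m n : ℕ} (X : Set (Fin n → ℝ)) (hX : Convex ℝ X)
    (φ : (Fin n → ℝ) → ℝ) (hφ : Differentiable ℝ φ)
    (M : Matrix (Fin m) (Fin n) ℝ) (h : Fin n → ℝ) (η : ℝ) (hη : 0 ≤ η)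
    (x₀ : Fin n → ℝ) (y : Fin m → ℝ) (xplus : Fin n → ℝ) (hxplus : xplus ∈ X)
    (hmin : IsMinOn (fun x => η * (∑ j, x j * h j) + breg φ x x₀) X xplus) :
    ∀ u ∈ X,
      η * (∑ i, M.mulVec u i * y i) ≥
        η * (∑ j, xplus j * h j) + breg φ xplus x₀ +
          η * (∑ j, u j * (M.transpose.mulVec y j - h j)) +
          breg φ u xplus - breg φ u x₀ :=
  stmt_4_general X hX φ hφ M h η x₀ y xplus hxplus hmin
end

section
/- (First inequality of the extrapolation-error lemma.) Let ‖·‖_X be a norm on ℝ^n and ‖·‖_Y a norm on ℝ^m. Let M, M_x, M_y be real m×n matrices with M = M_x + M_y, and let L_x, L_y ≥ 0 be constants such that |⟨M_x a, b⟩| ≤ L_x ‖a‖_X ‖b‖_Y and |⟨M_y a, b⟩| ≤ L_y ‖a‖_X ‖b‖_Y for all a ∈ ℝ^n, b ∈ ℝ^m. Let η_k > 0 and η_{k−1} ≥ 0, let x_k, x_{k−1}, x_{k−2}, x̂_k, x̂_{k−1} ∈ ℝ^n, let y_k, y_{k−1}, v ∈ ℝ^m, and let g_k ∈ ℝ^m.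 Assume: (i) M x_k − g_k = M_y((x_k − x̂_k) − (η_{k−1}/η_k)(x_{k−1} − x̂_{k−1})) + M_x((x_k − x_{k−1}) − (η_{k−1}/η_k)(x_{k−1} − x_{k−2})); and (ii) ‖x_{k−1} − x̂_{k−1}‖_X ≤ ‖x_{k−1} − x_{k−2}‖_X. Then for every α > 0: η_k⟨M x_k − g_k, v − y_k⟩ ≤ η_k⟨M_y(x_k − x̂_k), v − y_k⟩ − η_{k−1}⟨M_y(x_{k−1} − x̂_{k−1}), v − y_{k−1}⟩ + η_k⟨M_x(x_k − x_{k−1}), v − y_k⟩ − η_{k−1}⟨M_x(x_{k−1} − x_{k−2}), v − y_{k−1}⟩ + η_{k−1}·((L_x + L_y)/2)·(α‖x_{k−1} − x_{k−2}‖_X² + (1/α)‖y_k − y_{k−1}‖_Y²). -/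
/-- The standard inner product on `ℝ^d`. -/
def dotp {d : ℕ} (a b : Fin d → ℝ) : ℝ := ∑ i, a i * b i

lemma dotp_add_left {d : ℕ} (a b c : Fin d → ℝ) : dotp (a + b) c = dotp a c + dotp b c := by
  simp [dotp, add_mul, Finset.sum_add_distrib]

lemma dotp_sub_left {d : ℕ} (a b c : Fin d → ℝ) : dotp (a - b) c = dotp a c - dotp b c := by
  simp [dotp, sub_mul, Finset.sum_sub_distrib]

lemma dotp_smul_left {d : ℕ} (r : ℝ) (a c : Fin d → ℝ) : dotp (r • a) c = r * dotp a c := by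
  simp [dotp, Finset.mul_sum, mul_assoc]

lemma dotp_sub_right {d : ℕ} (a b c : Fin d → ℝ) : dotp a (b - c) = dotp a b - dotp a c := by
  simp [dotp, mul_sub, Finset.sum_sub_distrib]

/-- First inequality of the extrapolation-error lemma. -/
theorem stmt_9 {m n : ℕ}
    (NX : (Fin n → ℝ) → ℝ) (NY : (Fin m → ℝ) → ℝ)
    (hNX_def : ∀ x, NX x = 0 ↔ x = 0)
    (hNX_smul : ∀ (c : ℝ) (x : Fin n → ℝ), NX (c • x) = |c| * NX x)
    (hNX_add : ∀ x y : Fin n → ℝ, NX (x + y) ≤ NX x + NX y)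
    (hNY_def : ∀ y, NY y = 0 ↔ y = 0)
    (hNY_smul : ∀ (c : ℝ) (y : Fin m → ℝ), NY (c • y) = |c| * NY y)
    (hNY_add : ∀ y z : Fin m → ℝ, NY (y + z) ≤ NY y + NY z)
    (M Mx My : Matrix (Fin m) (Fin n) ℝ) (hM : M = Mx + My)
    (Lx Ly : ℝ) (hLx : 0 ≤ Lx) (hLy : 0 ≤ Ly)
    (hbx : ∀ (a : Fin n → ℝ) (b : Fin m → ℝ), |dotp (Mx.mulVec a) b| ≤ Lx * NX a * NY b)
    (hby : ∀ (a : Fin n → ℝ) (b : Fin m → ℝ), |dotp (My.mulVec a) b| ≤ Ly * NX a * NY b)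
    (ηk ηkm : ℝ) (hηk : 0 < ηk) (hηkm : 0 ≤ ηkm)
    (xk xkm xkm2 xhk xhkm : Fin n → ℝ) (yk ykm v : Fin m → ℝ) (gk : Fin m → ℝ)
    (hid : M.mulVec xk - gk =
        My.mulVec ((xk - xhk) - (ηkm / ηk) • (xkm - xhkm)) +
        Mx.mulVec ((xk - xkm) - (ηkm / ηk) • (xkm - xkm2)))
    (hxhat : NX (xkm - xhkm) ≤ NX (xkm - xkm2)) :
    ∀ α : ℝ, 0 < α →
      ηk * dotp (M.mulVec xk - gk) (v - yk) ≤
        ηk * dotp (My.mulVec (xk - xhk)) (v - yk)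
          - ηkm * dotp (My.mulVec (xkm - xhkm)) (v - ykm)
        + ηk * dotp (Mx.mulVec (xk - xkm)) (v - yk)
          - ηkm * dotp (Mx.mulVec (xkm - xkm2)) (v - ykm)
        + ηkm * ((Lx + Ly) / 2) *
            (α * (NX (xkm - xkm2)) ^ 2 + (1 / α) * (NY (yk - ykm)) ^ 2) := by
  intro α hα
  -- nonnegativity of the norms
  have hNX_nonneg : ∀ x, 0 ≤ NX x := by
    intro x
    have h0 : NX 0 = 0 := (hNX_def 0).mpr rfl
    have hneg : NX (-x) = NX x := by
      have := hNX_smul (-1) x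
      simpa using this
    have h := hNX_add x (-x)
    rw [add_neg_cancel, h0, hneg] at h
    linarith
  have hNY_nonneg : ∀ y, 0 ≤ NY y := by
    intro y
    have h0 : NY 0 = 0 := (hNY_def 0).mpr rfl
    have hneg : NY (-y) = NY y := by
      have := hNY_smul (-1) y
      simpa using this
    have h := hNY_add y (-y)
    rw [add_neg_cancel, h0, hneg] at h
    linarith
  set A := NX (xkm - xkm2) with hA
  set B := NY (yk - ykm) with hB
  have hA0 : 0 ≤ A := hNX_nonneg _
  have hB0 : 0 ≤ B := hNY_nonneg _
  -- the key exact identity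
  have hkey : ηk * dotp (M.mulVec xk - gk) (v - yk)
      = ηk * dotp (My.mulVec (xk - xhk)) (v - yk)
        - ηkm * dotp (My.mulVec (xkm - xhkm)) (v - yk)
      + ηk * dotp (Mx.mulVec (xk - xkm)) (v - yk)
        - ηkm * dotp (Mx.mulVec (xkm - xkm2)) (v - yk) := by
    rw [hid]
    simp only [Matrix.mulVec_sub, Matrix.mulVec_smul, dotp_add_left, dotp_sub_left,
      dotp_smul_left]
    field_simp
    ring
  rw [hkey]
  -- change of the y-argument
  have hshift : ∀ (a : Fin m → ℝ), dotp a (v - yk) = dotp a (v - ykm) - dotp a (yk - ykm) := by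
    intro a
    rw [dotp_sub_right, dotp_sub_right, dotp_sub_right]
    ring
  rw [hshift (My.mulVec (xkm - xhkm)), hshift (Mx.mulVec (xkm - xkm2))]
  -- bound the error terms
  have h1 : dotp (My.mulVec (xkm - xhkm)) (yk - ykm) ≤ Ly * A * B := by
    calc dotp (My.mulVec (xkm - xhkm)) (yk - ykm)
        ≤ |dotp (My.mulVec (xkm - xhkm)) (yk - ykm)| := le_abs_self _
      _ ≤ Ly * NX (xkm - xhkm) * NY (yk - ykm) := hby _ _
      _ ≤ Ly * A * B := by
          have := hNY_nonneg (yk - ykm)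
          nlinarith [mul_le_mul_of_nonneg_left hxhat hLy]
  have h2 : dotp (Mx.mulVec (xkm - xkm2)) (yk - ykm) ≤ Lx * A * B := le_trans (le_abs_self _) (hbx _ _)
  have hAM : 2 * (A * B) ≤ α * A ^ 2 + (1 / α) * B ^ 2 := by
    have hα' : α ≠ 0 := ne_of_gt hα
    rw [← sub_nonneg]
    have hre : α * A ^ 2 + (1 / α) * B ^ 2 - 2 * (A * B) = (α * A - B) ^ 2 / α := by
      field_simp
      ring
    rw [hre]
    positivity
  have hmul : ηkm * (Ly * A * B) + ηkm * (Lx * A * B)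
      ≤ ηkm * ((Lx + Ly) / 2) * (α * A ^ 2 + (1 / α) * B ^ 2) := by
    have hL : 0 ≤ Lx + Ly := by linarith
    nlinarith [mul_le_mul_of_nonneg_left hAM (mul_nonneg hηkm (by linarith : (0:ℝ) ≤ (Lx + Ly) / 2))]
  nlinarith [mul_le_mul_of_nonneg_left h1 hηkm, mul_le_mul_of_nonneg_left h2 hηkm]
end

section
/- (Second inequality of the extrapolation-error lemma.) Let ‖·‖_X be a norm on ℝ^n and ‖·‖_Y a norm on ℝ^m. Let M, M_x, M_y be real m×n matrices with M = M_x + M_y, and let L_x, L_y ≥ 0 be constants such that |⟨M_x a, b⟩| ≤ L_x ‖a‖_X ‖b‖_Y and |⟨M_y a, b⟩| ≤ L_y ‖a‖_X ‖b‖_Y for all a ∈ ℝ^n, b ∈ ℝ^m. Let η_k > 0 and η_{k−1} ≥ 0, let y_k, y_{k−1}, y_{k−2}, ŷ_k, ŷ_{k−1} ∈ ℝ^m, let x_k, x_{k−1}, u ∈ ℝ^n, and let h_k ∈ ℝ^n. Assume: (i) Mᵀ y_k − h_k = M_xᵀ((y_k − ŷ_k) − (η_{k−1}/η_k)(y_{k−1}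 − ŷ_{k−1})) + M_yᵀ((y_k − y_{k−1}) − (η_{k−1}/η_k)(y_{k−1} − y_{k−2})); and (ii) ‖y_{k−1} − ŷ_{k−1}‖_Y ≤ ‖y_{k−1} − y_{k−2}‖_Y. Then for every β > 0: −η_k⟨u − x_k, Mᵀ y_k − h_k⟩ ≤ −η_k⟨M_xᵀ(y_k − ŷ_k), u − x_k⟩ + η_{k−1}⟨M_xᵀ(y_{k−1} − ŷ_{k−1}), u − x_{k−1}⟩ − η_k⟨M_yᵀ(y_k − y_{k−1}), u − x_k⟩ + η_{k−1}⟨M_yᵀ(y_{k−1} − y_{k−2}), u − x_{k−1}⟩ + η_{k−1}·((L_x + L_y)/2)·(β‖x_{k−1} − x_k‖_X² + (1/β)‖y_{k−1} − y_{k−2}‖_Y²). -/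
/-- Second inequality of the extrapolation-error lemma. -/
theorem stmt_10 {m n : ℕ}
    (NX : (Fin n → ℝ) → ℝ) (NY : (Fin m → ℝ) → ℝ)
    (hNX_def : ∀ x, NX x = 0 ↔ x = 0)
    (hNX_smul : ∀ (c : ℝ) (x : Fin n → ℝ), NX (c • x) = |c| * NX x)
    (hNX_add : ∀ x y : Fin n → ℝ, NX (x + y) ≤ NX x + NX y)
    (hNY_def : ∀ y, NY y = 0 ↔ y = 0)
    (hNY_smul : ∀ (c : ℝ) (y : Fin m → ℝ), NY (c • y) = |c| * NY y)
    (hNY_add : ∀ y z : Fin m → ℝ, NY (y + z) ≤ NY y + NY z)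
    (M Mx My : Matrix (Fin m) (Fin n) ℝ) (hM : M = Mx + My)
    (Lx Ly : ℝ) (hLx : 0 ≤ Lx) (hLy : 0 ≤ Ly)
    (hbx : ∀ (a : Fin n → ℝ) (b : Fin m → ℝ), |dotp (Mx.mulVec a) b| ≤ Lx * NX a * NY b)
    (hby : ∀ (a : Fin n → ℝ) (b : Fin m → ℝ), |dotp (My.mulVec a) b| ≤ Ly * NX a * NY b)
    (ηk ηkm : ℝ) (hηk : 0 < ηk) (hηkm : 0 ≤ ηkm)
    (yk ykm ykm2 yhk yhkm : Fin m → ℝ) (xk xkm u : Fin n → ℝ) (hk : Fin n → ℝ)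
    (hid : M.transpose.mulVec yk - hk =
        Mx.transpose.mulVec ((yk - yhk) - (ηkm / ηk) • (ykm - yhkm)) +
        My.transpose.mulVec ((yk - ykm) - (ηkm / ηk) • (ykm - ykm2)))
    (hyhat : NY (ykm - yhkm) ≤ NY (ykm - ykm2)) :
    ∀ β : ℝ, 0 < β →
      -(ηk * dotp (u - xk) (M.transpose.mulVec yk - hk)) ≤
        -(ηk * dotp (Mx.transpose.mulVec (yk - yhk)) (u - xk))
          + ηkm * dotp (Mx.transpose.mulVec (ykm - yhkm)) (u - xkm)
        - ηk * dotp (My.transpose.mulVec (yk - ykm)) (u - xk)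
          + ηkm * dotp (My.transpose.mulVec (ykm - ykm2)) (u - xkm)
        + ηkm * ((Lx + Ly) / 2) *
            (β * (NX (xkm - xk)) ^ 2 + (1 / β) * (NY (ykm - ykm2)) ^ 2) := by
  intro β hβ
  have hdp : ∀ {d : ℕ} (a b : Fin d → ℝ), dotp a b = dotProduct a b :=
    fun a b => rfl
  -- nonnegativity of norms
  have hNXnn : ∀ x, 0 ≤ NX x := by
    intro x
    have h0 : NX (x + (-x)) = 0 := by simp [(hNX_def 0).mpr rfl]
    have hneg : NX (-x) = NX x := by
      have := hNX_smul (-1) x; simpa using this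
    have := hNX_add x (-x)
    nlinarith [this]
  have hNYnn : ∀ y, 0 ≤ NY y := by
    intro y
    have h0 : NY (y + (-y)) = 0 := by simp [(hNY_def 0).mpr rfl]
    have hneg : NY (-y) = NY y := by
      have := hNY_smul (-1) y; simpa using this
    have := hNY_add y (-y)
    nlinarith [this]
  have swap : ∀ (A : Matrix (Fin m) (Fin n) ℝ) (w : Fin m → ℝ) (v : Fin n → ℝ),
      dotp (A.transpose.mulVec w) v = dotp (A.mulVec v) w := by
    intro A w v
    rw [hdp, hdp, Matrix.mulVec_transpose, ← Matrix.dotProduct_mulVec,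
      dotProduct_comm]
  set a := NX (xkm - xk) with ha
  set b := NY (ykm - ykm2) with hb
  -- key cross-term bounds
  have key1 : dotp (Mx.transpose.mulVec (ykm - yhkm)) (xkm - xk) ≤ Lx * a * b := by
    rw [swap]
    refine le_trans (le_abs_self _) (le_trans (hbx _ _) ?_)
    have : Lx * NX (xkm - xk) * NY (ykm - yhkm) ≤ Lx * NX (xkm - xk) * NY (ykm - ykm2) :=
      mul_le_mul_of_nonneg_left hyhat (mul_nonneg hLx (hNXnn _))
    simpa [ha, hb] using this
  have key2 : dotp (My.transpose.mulVec (ykm - ykm2)) (xkm - xk) ≤ Ly * a * b := by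
    rw [swap]
    exact le_trans (le_abs_self _) (hby _ _)
  -- AM-GM
  have amgm : (Lx + Ly) * (a * b) ≤ ((Lx + Ly) / 2) * (β * a ^ 2 + (1 / β) * b ^ 2) := by
    have hab : a * b ≤ (β * a ^ 2 + (1 / β) * b ^ 2) / 2 := by
      have hβ' : (1 / β) * b ^ 2 * β = b ^ 2 := by field_simp
      nlinarith [sq_nonneg (β * a - b), hβ, hβ', mul_pos hβ hβ]
    nlinarith [add_nonneg hLx hLy, hab, sq_nonneg a, sq_nonneg b, hβ.le]
  -- linearity of dotp
  have dsub2 : ∀ {d : ℕ} (p q r : Fin d → ℝ), dotp p (q - r) = dotp p q - dotp p r := by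
    intro d p q r; simp [hdp, dotProduct_sub]
  have dadd2 : ∀ {d : ℕ} (p q r : Fin d → ℝ), dotp p (q + r) = dotp p q + dotp p r := by
    intro d p q r; simp [hdp, dotProduct_add]
  have dcomm : ∀ {d : ℕ} (p q : Fin d → ℝ), dotp p q = dotp q p := by
    intro d p q; simp [hdp, dotProduct_comm]
  -- expand the left-hand side using hid
  have hηne : ηk ≠ 0 := ne_of_gt hηk
  have heq : -(ηk * dotp (u - xk) (M.transpose.mulVec yk - hk)) =
      -(ηk * dotp (Mx.transpose.mulVec (yk - yhk)) (u - xk))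
      + ηkm * dotp (Mx.transpose.mulVec (ykm - yhkm)) (u - xk)
      - ηk * dotp (My.transpose.mulVec (yk - ykm)) (u - xk)
      + ηkm * dotp (My.transpose.mulVec (ykm - ykm2)) (u - xk) := by
    rw [hid]
    have dsmul2 : ∀ {d : ℕ} (p : Fin d → ℝ) (c : ℝ) (q : Fin d → ℝ),
        dotp p (c • q) = c * dotp p q := by
      intro d p c q; simp [hdp, dotProduct_smul]
    have dsub1 : ∀ {d : ℕ} (p q r : Fin d → ℝ), dotp (p - q) r = dotp p r - dotp q r := by
      intro d p q r; simp [hdp, sub_dotProduct]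
    simp only [Matrix.mulVec_sub, Matrix.mulVec_smul, dadd2, dsub2, dsmul2,
      dcomm (u - xk), dsub1]
    field_simp
    ring
  rw [heq]
  -- reduce to the cross-term estimate
  have hdiff1 : dotp (Mx.transpose.mulVec (ykm - yhkm)) (u - xk)
      - dotp (Mx.transpose.mulVec (ykm - yhkm)) (u - xkm)
      = dotp (Mx.transpose.mulVec (ykm - yhkm)) (xkm - xk) := by
    rw [← dsub2]; congr 1; abel
  have hdiff2 : dotp (My.transpose.mulVec (ykm - ykm2)) (u - xk)
      - dotp (My.transpose.mulVec (ykm - ykm2)) (u - xkm)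
      = dotp (My.transpose.mulVec (ykm - ykm2)) (xkm - xk) := by
    rw [← dsub2]; congr 1; abel
  nlinarith [mul_le_mul_of_nonneg_left key1 hηkm, mul_le_mul_of_nonneg_left key2 hηkm,
    mul_le_mul_of_nonneg_left amgm hηkm, hdiff1, hdiff2]
end
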